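/- For every positive integer n and every natural number r, 𝒢(n, r) = 2 if and only if z_1(n) = 2, r ≥ 2, and either the Zeckendorf representation of n has only one part or r < z_2(n). -/

import Mathlib

/-- `IsZeck n l` says that `l` is the Zeckendorf representation of `n`, recorded as the
list of indices of the Fibonacci parts in increasing order: every index is at least `2`,
consecutive indices differ by at least `2` (no two consecutive Fibonacci numbers), and the
corresponding Fibonacci numbers sum to `n`.  The parts of the Zeckendorf representation in
increasing order are then `z₁(n) = Nat.fib l.headI`, `z₂(n) = Nat.fib (l.getD 1 0)`, etc. -/
def IsZeck (n : ℕ) (l : List ℕ) : Prop :=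
  (∀ i ∈ l, 2 ≤ i) ∧ l.Chain' (fun a b => a + 2 ≤ b) ∧ (l.map Nat.fib).sum = n

/-- The Grundy values of single-heap Fibonacci nim positions `(n, r)`, where `n` is the heap
size and `r` is the maximal number of tokens that may be removed on the next move:
`grundy n r` is the least natural number not of the form
`grundy (n - k) (min (2 * k) (n - k))` for some `k` with `1 ≤ k ≤ min r n`.
In particular `grundy 0 r = 0` and `grundy n 0 = 0`. -/
noncomputable def grundy (n r : ℕ) : ℕ :=
  sInf {m : ℕ | ∀ k, 1 ≤ k → k ≤ min r n → grundy (n - k) (min (2 * k) (n - k)) ≠ m}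
termination_by n
decreasing_by
  have : k ≤ n := le_trans ‹k ≤ min r n› (min_le_right _ _)
  omega


/-!
Write `n = z₁ + z₂ + ⋯` in Zeckendorf form. The positions of value `0`, `1` and `2` are
characterised together by strong induction on `n`, the value `0` being Whinihan's
`𝒢(n, r) = 0 ↔ r < z₁`. Each move is judged by the Zeckendorf form of the heap it leaves, using
that a Zeckendorf sum `d < F_b` with smallest index `q` satisfies `d + F_(q-1) ≤ F_b`:
removing `k < z₁` tokens leaves a smallest part that is `< z₁` and `≤ 2k`; removing `z₁ - w`
tokens leaves `w + z₂ + ⋯`, of value `w`; removing `k` with `z₁ < k < z₂` leaves a heap whose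
second part is `≤ 2k`, so not a heap of value `z₁ ≤ 2`; and removing `z₂ - (v - z₁)` tokens
leaves `v + z₃ + ⋯`, of value `v`.
-/

open Nat

lemma isZeck_cons_iff {n a : ℕ} {l : List ℕ} :
    IsZeck n (a :: l) ↔
      2 ≤ a ∧ (∀ b ∈ l.head?, a + 2 ≤ b) ∧ fib a ≤ n ∧ IsZeck (n - fib a) l := by
  constructor
  · rintro ⟨hl, hc, hs⟩
    obtain ⟨hab, hc⟩ := List.isChain_cons.1 hc
    simp only [List.map_cons, List.sum_cons] at hs
    exact ⟨hl a List.mem_cons_self, hab, by omega, fun i hi => hl i (List.mem_cons_of_mem a hi),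
      hc, by omega⟩
  · rintro ⟨ha, hab, hn, hl, hc, hs⟩
    refine ⟨?_, List.isChain_cons.2 ⟨hab, hc⟩, by simp only [List.map_cons, List.sum_cons]; omega⟩
    simpa [ha] using hl

lemma isZeck_nil_iff {n : ℕ} : IsZeck n [] ↔ n = 0 :=
  ⟨fun h => h.2.2.symm, fun h => ⟨by simp, List.isChain_nil, h.symm⟩⟩

lemma IsZeck.append {d s : ℕ} {l m : List ℕ} (hl : IsZeck d l) (hm : IsZeck s m)
    (h : ∀ i ∈ l.getLast?, ∀ j ∈ m.head?, i + 2 ≤ j) : IsZeck (d + s) (l ++ m) := by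
  refine ⟨fun i hi => ?_, List.IsChain.append hl.2.1 hm.2.1 h, by simp [hl.2.2, hm.2.2]⟩
  rcases List.mem_append.1 hi with hi | hi
  exacts [hl.1 i hi, hm.1 i hi]

lemma IsZeck.fib_le {d i : ℕ} {l : List ℕ} (h : IsZeck d l) (hi : i ∈ l) : fib i ≤ d :=
  h.2.2 ▸ List.le_sum_of_mem (List.mem_map_of_mem hi)

lemma IsZeck.fib_head_pos {n a : ℕ} {l : List ℕ} (h : IsZeck n (a :: l)) : 0 < fib a :=
  fib_pos.2 (by have := h.1 a List.mem_cons_self; omega)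

lemma IsZeck.lt_of_lt_fib {d b i : ℕ} {l : List ℕ} (h : IsZeck d l) (hd : d < fib b)
    (hi : i ∈ l) : i < b :=
  lt_of_not_ge fun hbi => (h.fib_le hi).not_gt (hd.trans_le (fib_mono hbi))

theorem exists_isZeck (d : ℕ) : ∃ l, IsZeck d l := by
  have hz := d.isZeckendorfRep_zeckendorf
  have : IsTrans ℕ (fun a b => b + 2 ≤ a) := ⟨fun _ _ _ h h' => by omega⟩
  refine ⟨d.zeckendorf.reverse, fun i hi => ?_, ?_, by simp⟩
  · have := List.isChain_iff_pairwise.1 hz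
    simp only [List.pairwise_append] at this
    simpa using this.2.2 i (List.mem_reverse.1 hi) 0 (List.mem_singleton_self 0)
  · exact List.isChain_reverse.2 hz.left_of_append

lemma fib_le_two_mul_fib_sub_one {q : ℕ} (hq : 2 ≤ q) : fib q ≤ 2 * fib (q - 1) := by
  obtain ⟨q, rfl⟩ := exists_add_of_le hq
  rw [add_comm 2 q, fib_add_two, show q + 2 - 1 = q + 1 by omega]
  have := fib_mono (show q ≤ q + 1 by omega)
  omega

lemma two_mul_fib_lt_fib {a b : ℕ} (ha : 2 ≤ a) (hab : a + 2 ≤ b) : 2 * fib a < fib b := by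
  have := fib_lt_fib_succ ha
  have := fib_mono hab
  rw [fib_add_two] at this
  omega

lemma IsZeck.add_fib_sub_one_le {d b q : ℕ} {u : List ℕ} (h : IsZeck d (q :: u))
    (hd : d < fib b) : d + fib (q - 1) ≤ fib b := by
  induction u generalizing q d with
  | nil =>
    have hq := isZeck_nil_iff.1 (isZeck_cons_iff.1 h).2.2.2
    have := (isZeck_cons_iff.1 h).2.2.1
    have := fib_mono (show q + 1 ≤ b from h.lt_of_lt_fib hd List.mem_cons_self)
    have := fib_add_one (show q ≠ 0 by have := h.1 q List.mem_cons_self; omega)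
    omega
  | cons q' u ih =>
    obtain ⟨hq2, hqq', hq, htail⟩ := isZeck_cons_iff.1 h
    have := ih htail (by omega)
    have := fib_mono (show q + 1 ≤ q' - 1 by have := hqq' q' rfl; omega)
    have := fib_add_one (show q ≠ 0 by omega)
    omega

lemma IsZeck.fib_head_le_two_mul_sub {d b q : ℕ} {u : List ℕ} (h : IsZeck d (q :: u))
    (hd : d < fib b) : fib q ≤ 2 * (fib b - d) := by
  have := h.add_fib_sub_one_le hd
  have := fib_le_two_mul_fib_sub_one (h.1 q List.mem_cons_self)
  omega

lemma IsZeck.two_mul_fib_head_lt_fib_next {n a : ℕ} {l : List ℕ} (h : IsZeck n (a :: l)) :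
    ∀ b ∈ l.head?, 2 * fib a < fib b :=
  fun b hb => two_mul_fib_lt_fib (isZeck_cons_iff.1 h).1 ((isZeck_cons_iff.1 h).2.1 b hb)

theorem grundy_eq_iff (n r v : ℕ) : grundy n r = v ↔
    (∀ k, 1 ≤ k → k ≤ min r n → grundy (n - k) (min (2 * k) (n - k)) ≠ v) ∧
    ∀ w < v, ∃ k, 1 ≤ k ∧ k ≤ min r n ∧ grundy (n - k) (min (2 * k) (n - k)) = w := by
  set f : ℕ → ℕ := fun k => grundy (n - k) (min (2 * k) (n - k))
  set S : Set ℕ := {m | ∀ k, 1 ≤ k → k ≤ min r n → f k ≠ m}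
  have hS : S.Nonempty := by
    refine ⟨(Finset.Icc 1 (min r n)).sup f + 1, fun k hk1 hk2 => ?_⟩
    have := Finset.le_sup (f := f) (Finset.mem_Icc.2 ⟨hk1, hk2⟩)
    omega
  rw [grundy]
  constructor
  · rintro rfl
    refine ⟨Nat.sInf_mem hS, fun w hw => ?_⟩
    simpa [S, and_assoc] using Nat.notMem_of_lt_sInf hw
  · rintro ⟨hv, hlt⟩
    refine IsLeast.csInf_eq ⟨hv, fun w hw => not_lt.1 fun hwv => ?_⟩
    obtain ⟨k, hk1, hk2, hk⟩ := hlt w hwv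
    exact hw k hk1 hk2 hk

lemma grundy_zero_left (r : ℕ) : grundy 0 r = 0 :=
  (grundy_eq_iff 0 r 0).2 ⟨fun k hk1 hk2 => by omega, fun _ hw => absurd hw (by omega)⟩

/-- `∀ b ∈ l.head?, r < fib b` says that `r` is below the second Zeckendorf part, if any. -/
def SmallGrundyValues (n : ℕ) : Prop :=
  ∀ r a l, IsZeck n (a :: l) →
    (grundy n r = 0 ↔ r < fib a) ∧
    ∀ v, 0 < v → v ≤ 2 → (grundy n r = v ↔ fib a = v ∧ v ≤ r ∧ ∀ b ∈ l.head?, r < fib b)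

lemma exists_isZeck_sub_of_lt_fib_head {n a k : ℕ} {l : List ℕ} (hz : IsZeck n (a :: l))
    (hk : 1 ≤ k) (hka : k < fib a) :
    ∃ q u, IsZeck (n - k) (q :: u) ∧ fib q ≤ 2 * k ∧ fib q < fib a := by
  obtain ⟨-, hsep, hfa, hl⟩ := isZeck_cons_iff.1 hz
  obtain ⟨_ | ⟨q, u⟩, hm⟩ := exists_isZeck (fib a - k)
  · exact absurd (isZeck_nil_iff.1 hm) (by omega)
  have hd : fib a - k < fib a := by omega
  have hrep := hm.append hl fun i hi j hj =>
    by have := hm.lt_of_lt_fib hd (List.mem_of_mem_getLast? hi); have := hsep j hj; omega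
  refine ⟨q, u ++ l, by rwa [show fib a - k + (n - fib a) = n - k by omega] at hrep, ?_, ?_⟩
  · have := hm.fib_head_le_two_mul_sub hd
    omega
  · have := hm.fib_le List.mem_cons_self
    omega

lemma grundy_sub_ne_zero_of_lt_fib_head {n a k : ℕ} {l : List ℕ}
    (ih : ∀ m < n, SmallGrundyValues m) (hz : IsZeck n (a :: l)) (hk : 1 ≤ k)
    (hka : k < fib a) : grundy (n - k) (min (2 * k) (n - k)) ≠ 0 := by
  obtain ⟨q, u, hm, hq, -⟩ := exists_isZeck_sub_of_lt_fib_head hz hk hka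
  have := hm.fib_le List.mem_cons_self
  have := (isZeck_cons_iff.1 hz).2.2.1
  rw [Ne, ((ih _ (by omega)) _ _ _ hm).1]
  omega

lemma grundy_sub_ne_fib_head_of_lt_fib_head {n a k : ℕ} {l : List ℕ}
    (ih : ∀ m < n, SmallGrundyValues m) (hz : IsZeck n (a :: l)) (ha : fib a ≤ 2) (hk : 1 ≤ k)
    (hka : k < fib a) : grundy (n - k) (min (2 * k) (n - k)) ≠ fib a := by
  obtain ⟨q, u, hm, -, hqa⟩ := exists_isZeck_sub_of_lt_fib_head hz hk hka
  have := (isZeck_cons_iff.1 hz).2.2.1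
  rw [Ne, ((ih _ (by omega)) _ _ _ hm).2 _ (by omega) ha]
  omega

lemma grundy_sub_fib_head_sub {n a w : ℕ} {l : List ℕ}
    (ih : ∀ m < n, SmallGrundyValues m) (hz : IsZeck n (a :: l)) (hw : w ≤ 2) (hwa : w < fib a) :
    grundy (n - (fib a - w)) (min (2 * (fib a - w)) (n - (fib a - w))) = w := by
  obtain ⟨-, hsep, hfa, hl⟩ := isZeck_cons_iff.1 hz
  have hlt := hz.two_mul_fib_head_lt_fib_next
  rcases Nat.eq_zero_or_pos w with rfl | hw0
  · rw [Nat.sub_zero]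
    cases l with
    | nil =>
      rw [isZeck_nil_iff.1 hl, grundy_zero_left]
    | cons b l =>
      have := hlt b rfl
      rw [((ih _ (by omega)) _ _ _ hl).1]
      omega
  · have hfw : fib (w + 1) = w := by interval_cases w <;> rfl
    have hwa' : w + 2 ≤ a := by
      by_contra! h
      have := fib_mono (show a ≤ w + 1 by omega)
      omega
    have hrep : IsZeck (n - (fib a - w)) ((w + 1) :: l) :=
      isZeck_cons_iff.2 ⟨by omega, fun b hb => by have := hsep b hb; omega, by omega,
        by rwa [show n - (fib a - w) - fib (w + 1) = n - fib a by omega]⟩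
    refine ((ih _ (by omega)) _ _ _ hrep).2 w hw0 hw |>.2 ⟨hfw, by omega, fun b hb => ?_⟩
    have := hlt b hb
    omega

lemma grundy_sub_fib_next_sub {n a b v : ℕ} {l : List ℕ}
    (ih : ∀ m < n, SmallGrundyValues m) (hz : IsZeck n (a :: b :: l)) (hv0 : 0 < v)
    (hv : v ≤ 2) (hav : fib a ≤ v) :
    grundy (n - (fib b - (v - fib a))) (min (2 * (fib b - (v - fib a)))
      (n - (fib b - (v - fib a)))) = v := by
  obtain ⟨ha, hab, hfa, hbl⟩ := isZeck_cons_iff.1 hz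
  obtain ⟨-, hsep, hfb, hl⟩ := isZeck_cons_iff.1 hbl
  replace hab := hab b rfl
  have hlt := hbl.two_mul_fib_head_lt_fib_next
  have hfa1 : 1 ≤ fib a := fib_pos.2 (by omega)
  have hfb3 : 3 ≤ fib b := fib_mono (show 4 ≤ b by omega)
  have hfw : fib (v + 1) = v := by interval_cases v <;> rfl
  have hrep : IsZeck (n - (fib b - (v - fib a))) ((v + 1) :: l) :=
    isZeck_cons_iff.2 ⟨by omega, fun c hc => by have := hsep c hc; omega, by omega,
      by rwa [show n - (fib b - (v - fib a)) - fib (v + 1) = n - fib a - fib b by omega]⟩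
  refine ((ih _ (by omega)) _ _ _ hrep).2 v hv0 hv |>.2 ⟨hfw, by omega, fun c hc => ?_⟩
  have := hlt c hc
  omega

lemma grundy_sub_ne_fib_head_of_lt_fib_next {n a b k : ℕ} {l : List ℕ}
    (ih : ∀ m < n, SmallGrundyValues m) (hz : IsZeck n (a :: b :: l)) (ha : fib a ≤ 2)
    (hak : fib a < k) (hkb : k < fib b) : grundy (n - k) (min (2 * k) (n - k)) ≠ fib a := by
  obtain ⟨-, -, hfa, hbl⟩ := isZeck_cons_iff.1 hz
  obtain ⟨-, hsep, hfb, hl⟩ := isZeck_cons_iff.1 hbl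
  have hfa1 := hz.fib_head_pos
  -- `n - k = d + z₃ + ⋯`, where `d` takes the place of the two smallest parts `fib a + fib b`
  set d := fib b - (k - fib a)
  have hdb : d < fib b := by omega
  obtain ⟨_ | ⟨q, u⟩, hm⟩ := exists_isZeck d
  · exact absurd (isZeck_nil_iff.1 hm) (by omega)
  have hrep := hm.append hl fun i hi j hj =>
    by have := hm.lt_of_lt_fib hdb (List.mem_of_mem_getLast? hi); have := hsep j hj; omega
  rw [show d + (n - fib a - fib b) = n - k by omega, List.cons_append] at hrep
  intro h
  obtain ⟨hq, -, hnext⟩ := ((ih _ (by omega)) _ _ _ hrep).2 _ hfa1 ha |>.1 h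
  cases u with
  | nil =>
    have := isZeck_nil_iff.1 (isZeck_cons_iff.1 hm).2.2.2
    have := (isZeck_cons_iff.1 hm).2.2.1
    omega
  | cons q' u =>
    -- the second part `fib q'` of `n - k` is at most `2 * k`
    obtain ⟨-, -, hqd, htail⟩ := isZeck_cons_iff.1 hm
    have := htail.fib_head_le_two_mul_sub (show d - fib q < fib b by omega)
    have := htail.fib_le List.mem_cons_self
    have := hnext q' rfl
    omega

lemma grundy_eq_zero_iff_of_isZeck {n a r : ℕ} {l : List ℕ}
    (ih : ∀ m < n, SmallGrundyValues m) (hz : IsZeck n (a :: l)) :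
    grundy n r = 0 ↔ r < fib a := by
  have hfa := (isZeck_cons_iff.1 hz).2.2.1
  have hfa1 := hz.fib_head_pos
  rw [grundy_eq_iff]
  constructor
  · rintro ⟨h, -⟩
    by_contra! hr
    have := grundy_sub_fib_head_sub ih hz (le_of_lt two_pos) hfa1
    exact h (fib a) hfa1 (le_min hr hfa) (by rwa [Nat.sub_zero] at this)
  · intro hr
    exact ⟨fun k hk1 hk2 => grundy_sub_ne_zero_of_lt_fib_head ih hz hk1 (by omega),
      fun w hw => absurd hw (Nat.not_lt_zero w)⟩

lemma grundy_eq_fib_head {n a r : ℕ} {l : List ℕ}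
    (ih : ∀ m < n, SmallGrundyValues m) (hz : IsZeck n (a :: l)) (ha : fib a ≤ 2)
    (hr : fib a ≤ r) (hl : ∀ b ∈ l.head?, r < fib b) : grundy n r = fib a := by
  have hfa := (isZeck_cons_iff.1 hz).2.2.1
  have hfa1 := hz.fib_head_pos
  rw [grundy_eq_iff]
  refine ⟨fun k hk1 hk2 => ?_, fun w hw =>
    ⟨fib a - w, by omega, by omega, grundy_sub_fib_head_sub ih hz (by omega) hw⟩⟩
  rcases lt_trichotomy k (fib a) with hk | rfl | hk
  · exact grundy_sub_ne_fib_head_of_lt_fib_head ih hz ha hk1 hk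
  · rw [← Nat.sub_zero (fib a), grundy_sub_fib_head_sub ih hz (by omega) hfa1]
    omega
  · cases l with
    | nil =>
      have := isZeck_nil_iff.1 (isZeck_cons_iff.1 hz).2.2.2
      omega
    | cons b l =>
      exact grundy_sub_ne_fib_head_of_lt_fib_next ih hz ha hk (by have := hl b rfl; omega)

lemma fib_head_eq_of_grundy_eq {n a r v : ℕ} {l : List ℕ}
    (ih : ∀ m < n, SmallGrundyValues m) (hz : IsZeck n (a :: l)) (hv0 : 0 < v) (hv : v ≤ 2)
    (h : grundy n r = v) : fib a = v ∧ v ≤ r ∧ ∀ b ∈ l.head?, r < fib b := by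
  have hfa := (isZeck_cons_iff.1 hz).2.2.1
  have hfa1 := hz.fib_head_pos
  have hnomove := ((grundy_eq_iff n r v).1 h).1
  have hr : fib a ≤ r := by
    by_contra! hr
    have := (grundy_eq_zero_iff_of_isZeck ih hz).2 hr
    omega
  have hav : fib a ≤ v := by
    by_contra! hva
    exact hnomove _ (by omega) (by omega) (grundy_sub_fib_head_sub ih hz hv hva)
  have hnext : ∀ b ∈ l.head?, r < fib b := by
    cases l with
    | nil => simp
    | cons b l =>
      rintro _ ⟨⟩
      by_contra! hb
      obtain ⟨ha, hab, -, hbl⟩ := isZeck_cons_iff.1 hz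
      have hfb := (isZeck_cons_iff.1 hbl).2.2.1
      have hfb2 : 2 ≤ fib b := fib_mono (show 3 ≤ b by have := hab b rfl; omega)
      exact hnomove _ (by omega) (by omega) (grundy_sub_fib_next_sub ih hz hv0 hv hav)
  obtain rfl : fib a = v := by
    by_contra hne
    have := grundy_eq_fib_head ih hz (by omega) hr hnext
    omega
  exact ⟨rfl, hr, hnext⟩

theorem smallGrundyValues (n : ℕ) : SmallGrundyValues n := by
  induction n using Nat.strong_induction_on with
  | _ n ih =>
  intro r a l hz
  refine ⟨grundy_eq_zero_iff_of_isZeck ih hz, fun v hv0 hv =>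
    ⟨fib_head_eq_of_grundy_eq ih hz hv0 hv, ?_⟩⟩
  rintro ⟨rfl, hr, hl⟩
  exact grundy_eq_fib_head ih hz hv hr hl

theorem grundy_eq_two_iff_general (n r : ℕ) (l : List ℕ) (hl : IsZeck n l) :
    grundy n r = 2 ↔
      Nat.fib l.headI = 2 ∧ 2 ≤ r ∧ (l.length = 1 ∨ r < Nat.fib (l.getD 1 0)) := by
  cases l with
  | nil =>
    obtain rfl := isZeck_nil_iff.1 hl
    simp [grundy_zero_left]
  | cons a l =>
    rw [(smallGrundyValues n r a l hl).2 2 two_pos le_rfl]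
    cases l <;> simp

/-- For every positive integer `n` and every natural number `r`, `𝒢(n, r) = 2` if and only if
`z₁(n) = 2`, `r ≥ 2`, and either the Zeckendorf representation of `n` has only one part or
`r < z₂(n)`. -/
theorem grundy_eq_two_iff (n r : ℕ) (hn : 0 < n) (l : List ℕ) (hl : IsZeck n l) :
    grundy n r = 2 ↔
      Nat.fib l.headI = 2 ∧ 2 ≤ r ∧ (l.length = 1 ∨ r < Nat.fib (l.getD 1 0)) :=
  grundy_eq_two_iff_general n r l hl
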